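/- arXiv:2104.01880 — 2 statements merged into one kernel-verified Lean document; each statement's English description precedes it below -/
import Mathlib

section
/- For every real number u with |u| < 2π (u ≠ 0) and every real number x, one has sinh((x−1/2)u)/(2·sinh(u/2)) = Σ_{k=0}^{∞} (B_{2k+1}(x)/(2k+1)!)·u^{2k}. -/
/-! The Bernoulli series `∑ Bₙ uⁿ / n!` converges absolutely for `|u| < 2π`, because
`ζ(2k) ≤ ζ(2)` bounds `|B₂ₖ| / (2k)!` by a multiple of `(2π)^(-2k)`. Absolute convergence lets
Cauchy products evaluate the formal identities `B(X) (e^X - 1) = X` and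
`B(X) e^(xX) = ∑ Bₙ(x) Xⁿ / n!` at `u`, which gives `u e^(xu) / (e^u - 1) = ∑ Bₙ(x) uⁿ / n!`.
The odd part of this function of `u`, divided by `u`, simplifies to
`sinh((x - 1/2) u) / (2 sinh(u/2))`. -/

open Real

/-- Evaluation at a real `x` of the `n`-th Bernoulli polynomial, defined by the generating
function `∑_{n ≥ 0} (Bₙ(x)/n!) tⁿ = t e^{tx}/(eᵗ - 1)` for `|t| < 2π`. -/
noncomputable def bernoulliPoly (n : ℕ) (x : ℝ) : ℝ :=
  ((Polynomial.bernoulli n).map (algebraMap ℚ ℝ)).eval x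

open PowerSeries
open scoped Nat

open Finset in
theorem hasSum_coeff_mul_mul_pow {R : Type*} [NormedCommRing R] [CompleteSpace R]
    {f g : R⟦X⟧} {u : R}
    (hf : Summable fun n => ‖coeff n f * u ^ n‖) (hg : Summable fun n => ‖coeff n g * u ^ n‖) :
    HasSum (fun n => coeff n (f * g) * u ^ n)
      ((∑' n, coeff n f * u ^ n) * ∑' n, coeff n g * u ^ n) := by
  rw [tsum_mul_tsum_eq_tsum_sum_antidiagonal_of_summable_norm hf hg]
  have h (n : ℕ) : coeff n (f * g) * u ^ n = ∑ kl ∈ antidiagonal n,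
      coeff kl.1 f * u ^ kl.1 * (coeff kl.2 g * u ^ kl.2) := by
    rw [coeff_mul, Finset.sum_mul]
    refine Finset.sum_congr rfl fun kl hkl => ?_
    rw [← HasAntidiagonal.mem_antidiagonal.1 hkl, pow_add]
    ring
  simp only [h]
  exact (summable_norm_sum_mul_antidiagonal_of_summable_norm hf hg).of_norm.hasSum

theorem coeff_rescale_exp_mul_pow (a u : ℝ) (n : ℕ) :
    coeff n (rescale a (exp ℝ)) * u ^ n = (a * u) ^ n / n ! := by
  simp only [coeff_rescale, coeff_exp, one_div, map_inv₀, map_natCast, mul_pow]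
  ring

theorem hasSum_coeff_rescale_exp_mul_pow (a u : ℝ) :
    HasSum (fun n => coeff n (rescale a (exp ℝ)) * u ^ n) (Real.exp (a * u)) := by
  simp only [coeff_rescale_exp_mul_pow, Real.exp_eq_exp_ℝ]
  exact NormedSpace.expSeries_div_hasSum_exp (a * u)

theorem summable_norm_coeff_rescale_exp_mul_pow (a u : ℝ) :
    Summable fun n => ‖coeff n (rescale a (exp ℝ)) * u ^ n‖ := by
  simp only [coeff_rescale_exp_mul_pow, norm_div, norm_pow, RCLike.norm_natCast]
  exact Real.summable_pow_div_factorial _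

theorem abs_bernoulli_two_mul_div_factorial_le {k : ℕ} (hk : k ≠ 0) :
    |(bernoulli (2 * k) : ℝ)| / (2 * k)! ≤ 6 / (2 * π) ^ (2 * k) := by
  set z : ℝ := (-1) ^ (k + 1) * 2 ^ (2 * k - 1) * π ^ (2 * k) * bernoulli (2 * k) / (2 * k)!
  have hz : HasSum (fun n : ℕ => 1 / (n : ℝ) ^ (2 * k)) z := hasSum_zeta_nat hk
  have hz_le : z ≤ π ^ 2 / 6 := by
    refine hasSum_le (fun n => ?_) hz hasSum_zeta_two
    rcases Nat.eq_zero_or_pos n with rfl | hn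
    · simp [hk]
    · gcongr
      · exact_mod_cast hn
      · omega
  have hz_eq : z = (2 * π) ^ (2 * k) / 2 * (|(bernoulli (2 * k) : ℝ)| / (2 * k)!) := by
    have h2 : (2 : ℝ) ^ (2 * k) = 2 ^ (2 * k - 1 + 1) := by
      rw [Nat.sub_add_cancel (by omega)]
    rw [← abs_of_nonneg (hz.nonneg fun n => by positivity), mul_pow, h2, pow_succ]
    simp only [z, abs_div, abs_mul, abs_pow, abs_neg, abs_one, one_pow, one_mul, abs_two,
      abs_of_pos pi_pos, Nat.abs_cast]
    ring
  rw [le_div_iff₀ (by positivity)]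
  nlinarith [pi_pos, pi_le_four]

theorem abs_bernoulli_div_factorial_le (n : ℕ) :
    |(bernoulli n : ℝ)| / n ! ≤ 6 / (2 * π) ^ n := by
  obtain ⟨k, rfl | rfl⟩ := Nat.even_or_odd' n
  · rcases eq_or_ne k 0 with rfl | hk
    · norm_num
    · exact abs_bernoulli_two_mul_div_factorial_le hk
  · rcases eq_or_ne k 0 with rfl | hk
    · rw [div_le_div_iff₀ (by positivity) (by positivity)]
      norm_num
      linarith [pi_le_four]
    · rw [bernoulli_eq_zero_of_odd (odd_two_mul_add_one k) (by omega)]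
      simp only [Rat.cast_zero, abs_zero, zero_div]
      positivity

theorem summable_norm_coeff_bernoulliPowerSeries_mul_pow {u : ℝ} (hu : |u| < 2 * π) :
    Summable fun n => ‖coeff n (bernoulliPowerSeries ℝ) * u ^ n‖ := by
  have hr : |u| / (2 * π) < 1 := (div_lt_one (by positivity)).2 hu
  refine .of_nonneg_of_le (fun n => norm_nonneg _) (fun n => ?_)
    ((summable_geometric_of_lt_one (by positivity) hr).mul_left 6)
  calc ‖coeff n (bernoulliPowerSeries ℝ) * u ^ n‖ = |(bernoulli n : ℝ)| / n ! * |u| ^ n := by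
        simp only [bernoulliPowerSeries, coeff_mk, norm_mul, norm_pow, Real.norm_eq_abs]
        simp [abs_div]
    _ ≤ 6 / (2 * π) ^ n * |u| ^ n :=
        mul_le_mul_of_nonneg_right (abs_bernoulli_div_factorial_le n) (by positivity)
    _ = 6 * (|u| / (2 * π)) ^ n := by rw [div_pow]; ring

theorem tsum_coeff_bernoulliPowerSeries_mul_pow_mul_exp_sub_one {u : ℝ} (hu : |u| < 2 * π) :
    (∑' n, coeff n (bernoulliPowerSeries ℝ) * u ^ n) * (Real.exp u - 1) = u := by
  have hβ := summable_norm_coeff_bernoulliPowerSeries_mul_pow hu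
  have hmul : bernoulliPowerSeries ℝ * rescale 1 (exp ℝ) = bernoulliPowerSeries ℝ + X := by
    rw [rescale_one, RingHom.id_apply, ← bernoulliPowerSeries_mul_exp_sub_one ℝ]
    ring
  have h₁ := hasSum_coeff_mul_mul_pow hβ (summable_norm_coeff_rescale_exp_mul_pow 1 u)
  rw [hmul, (hasSum_coeff_rescale_exp_mul_pow 1 u).tsum_eq, one_mul] at h₁
  have h₂ : HasSum (fun n => coeff n (bernoulliPowerSeries ℝ + X) * u ^ n)
      ((∑' n, coeff n (bernoulliPowerSeries ℝ) * u ^ n) + u) := by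
    have hX : HasSum (fun n => coeff n (X : ℝ⟦X⟧) * u ^ n) u := by
      simpa using hasSum_single (f := fun n => coeff n (X : ℝ⟦X⟧) * u ^ n) 1
        fun n hn => by simp [coeff_X, hn]
    simpa only [map_add, add_mul] using hβ.of_norm.hasSum.add hX
  linarith [h₁.unique h₂]

theorem bernoulliPowerSeries_mul_rescale_exp (x : ℝ) :
    bernoulliPowerSeries ℝ * rescale x (exp ℝ) = mk fun n => bernoulliFun n x / n ! := by
  have hexp : exp ℝ - 1 ≠ 0 := fun h => by simpa using congrArg (coeff 1) h
  refine mul_right_cancel₀ hexp ?_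
  rw [mul_right_comm, bernoulliPowerSeries_mul_exp_sub_one,
    ← Polynomial.bernoulli_generating_function]
  congr 2
  ext n
  simp [bernoulliFun, Polynomial.eval_map_algebraMap, Rat.smul_def, div_eq_mul_inv, mul_comm]

theorem hasSum_bernoulliFun_div_factorial_mul_pow {u : ℝ} (hu : u ≠ 0) (hu2 : |u| < 2 * π)
    (x : ℝ) :
    HasSum (fun n => bernoulliFun n x / n ! * u ^ n) (u * Real.exp (x * u) / (Real.exp u - 1)) := by
  have hexp : Real.exp u - 1 ≠ 0 := sub_ne_zero.2 (mt (Real.exp_eq_one_iff u).1 hu)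
  have h := hasSum_coeff_mul_mul_pow (summable_norm_coeff_bernoulliPowerSeries_mul_pow hu2)
    (summable_norm_coeff_rescale_exp_mul_pow x u)
  rw [bernoulliPowerSeries_mul_rescale_exp, (hasSum_coeff_rescale_exp_mul_pow x u).tsum_eq,
    eq_div_iff hexp |>.2 (tsum_coeff_bernoulliPowerSeries_mul_pow_mul_exp_sub_one hu2)] at h
  simpa only [coeff_mk, div_mul_eq_mul_div] using h

theorem hasSum_odd_mul_pow {K : Type*} [Field K] [CharZero K] [TopologicalSpace K]
    [IsTopologicalRing K] {a : ℕ → K} {u s t : K} (hs : HasSum (fun n => a n * u ^ n) s)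
    (ht : HasSum (fun n => a n * (-u) ^ n) t) :
    HasSum (fun k => a (2 * k + 1) * u ^ (2 * k + 1)) ((s - t) / 2) := by
  have hodd : Function.Injective fun k : ℕ => 2 * k + 1 := fun _ _ h => by simpa using h
  have heven (n : ℕ) (hn : n ∉ Set.range fun k : ℕ => 2 * k + 1) :
      a n * u ^ n - a n * (-u) ^ n = 0 := by
    obtain ⟨k, rfl⟩ : Even n := Nat.not_odd_iff_even.1 fun ⟨k, hk⟩ => hn ⟨k, hk.symm⟩
    rw [Even.neg_pow ⟨k, rfl⟩, sub_self]
  have h := ((hodd.hasSum_iff heven).2 (hs.sub ht)).div_const 2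
  refine h.congr_fun fun k => ?_
  simp only [Function.comp_apply, Odd.neg_pow (odd_two_mul_add_one k)]
  ring

theorem sinh_div_two_mul_sinh_eq_odd_part_div {u : ℝ} (hu : u ≠ 0) (x : ℝ) :
    sinh ((x - 1 / 2) * u) / (2 * sinh (u / 2)) =
      (u * Real.exp (x * u) / (Real.exp u - 1) - -u * Real.exp (x * -u) / (Real.exp (-u) - 1))
        / 2 / u := by
  have hexp : Real.exp u = Real.exp (u / 2) ^ 2 := by rw [← Real.exp_nat_mul]; ring_nf
  have hxu : Real.exp (x * u) = Real.exp ((x - 1 / 2) * u) * Real.exp (u / 2) := by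
    rw [← Real.exp_add]; ring_nf
  have hE1 : Real.exp (u / 2) ^ 2 - 1 ≠ 0 :=
    hexp ▸ sub_ne_zero.2 (mt (Real.exp_eq_one_iff u).1 hu)
  rw [Real.sinh_eq, Real.sinh_eq, Real.exp_neg, Real.exp_neg, Real.exp_neg, mul_neg, Real.exp_neg,
    hexp, hxu]
  have hE : Real.exp (u / 2) ≠ 0 := (Real.exp_pos _).ne'
  have hy : Real.exp ((x - 1 / 2) * u) ≠ 0 := (Real.exp_pos _).ne'
  generalize Real.exp (u / 2) = E at *
  generalize Real.exp ((x - 1 / 2) * u) = y at *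
  have hE1' : 1 - E ^ 2 ≠ 0 := fun h => hE1 (by linear_combination -h)
  field_simp
  ring

/-- For `0 < |u| < 2π` and every real `x`,
`sinh((x-1/2)u) / (2 sinh(u/2)) = ∑_{k ≥ 0} (B_{2k+1}(x)/(2k+1)!) u^{2k}`. -/
theorem sinh_div_sinh_eq_tsum_bernoulli (u : ℝ) (hu : u ≠ 0) (hu2 : |u| < 2 * π) (x : ℝ) :
    Real.sinh ((x - 1/2) * u) / (2 * Real.sinh (u / 2))
      = ∑' k : ℕ, bernoulliPoly (2 * k + 1) x / (Nat.factorial (2 * k + 1) : ℝ) * u ^ (2 * k) := by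
  have hpos := hasSum_bernoulliFun_div_factorial_mul_pow hu hu2 x
  have hneg := hasSum_bernoulliFun_div_factorial_mul_pow (neg_ne_zero.2 hu) (by rwa [abs_neg]) x
  rw [sinh_div_two_mul_sinh_eq_odd_part_div hu x]
  refine (((hasSum_odd_mul_pow hpos hneg).div_const u).congr_fun fun k => ?_).tsum_eq.symm
  rw [pow_succ, ← mul_assoc, mul_div_cancel_right₀ _ hu]
  -- `bernoulliPoly` and Mathlib's `bernoulliFun` have the same body
  rfl
end

section
/- For every integer L ≥ 0 and every real u > 0, the function x ↦ S_{L+1}(x,u) has on the interval (0,1/2) exactly one critical point x_m ∈ (0,1/2) (i.e. a unique point where its derivative in x vanishes); moreover x ↦ S_{L+1}(x,u) is strictly increasing on (0, x_m) and strictly decreasing on (x_m, 1/2). -/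
open Real

/-- For an integer `L ≥ -1`, `S_L(x,u) = (-1)^L (sinh((x-1/2)u)/(2 sinh(u/2))
    - ∑_{k=0}^{L} (B_{2k+1}(x)/(2k+1)!) u^{2k})`, the empty sum (for `L = -1`) being zero. -/
noncomputable def S (L : ℤ) (x u : ℝ) : ℝ :=
  (-1 : ℝ) ^ L * (Real.sinh ((x - 1/2) * u) / (2 * Real.sinh (u / 2))
    - ∑ k ∈ Finset.range (L + 1).toNat,
        bernoulliPoly (2 * k + 1) x / (Nat.factorial (2 * k + 1) : ℝ) * u ^ (2 * k))

/-! The second `x`-derivative of `S_{L+1}` is `-u² S_L`: differentiating `B_{2k}` gives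
`2k B_{2k-1}`, which shifts the Bernoulli sum by one term. Moreover `S_L` vanishes at `1/2`
(odd Bernoulli polynomials vanish there) and, for `L ≥ 0`, at `0` (the only nonzero odd
Bernoulli number is `B₁ = -1/2`). Since `S_{-1} > 0` on `(0,1/2)`, induction on `L` shows that
each `S_{L+1}` is strictly concave on `[0,1/2]` with zero boundary values, hence positive inside.
Rolle's theorem then gives a critical point of `S_{L+1}`, unique because its derivative is
strictly decreasing. -/

open Set

lemma exists_unique_critical_point_of_strictAntiOn_deriv {f : ℝ → ℝ} {a b : ℝ} (hab : a < b)
    (hfc : ContinuousOn f (Icc a b)) (hfab : f a = f b)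
    (hf' : StrictAntiOn (deriv f) (Ioo a b)) :
    ∃ c ∈ Ioo a b, (∀ y ∈ Ioo a b, deriv f y = 0 ↔ y = c) ∧
      StrictMonoOn f (Ioo a c) ∧ StrictAntiOn f (Ioo c b) := by
  obtain ⟨c, hc, hfc'⟩ := exists_deriv_eq_zero hab hfc hfab
  refine ⟨c, hc, fun y hy => ⟨fun hy' => hf'.injOn hy hc (hy'.trans hfc'.symm), ?_⟩, ?_, ?_⟩
  · rintro rfl
    exact hfc'
  · refine strictMonoOn_of_deriv_pos (convex_Ioo a c)
      (hfc.mono (Ioo_subset_Icc_self.trans (Icc_subset_Icc le_rfl hc.2.le))) fun y hy => ?_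
    rw [interior_Ioo] at hy
    exact hfc' ▸ hf' ⟨hy.1, hy.2.trans hc.2⟩ hc hy.2
  · refine strictAntiOn_of_deriv_neg (convex_Ioo c b)
      (hfc.mono (Ioo_subset_Icc_self.trans (Icc_subset_Icc hc.1.le le_rfl))) fun y hy => ?_
    rw [interior_Ioo] at hy
    exact hfc' ▸ hf' hc ⟨hc.1.trans hy.1, hy.2⟩ hy.1

lemma bernoulliPoly_ratCast (n : ℕ) (q : ℚ) :
    bernoulliPoly n q = ((Polynomial.bernoulli n).eval q : ℚ) := by
  rw [bernoulliPoly, Polynomial.eval_map_algebraMap, ← eq_ratCast (algebraMap ℚ ℝ),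
    Polynomial.aeval_algebraMap_apply_eq_algebraMap_eval, eq_ratCast]

lemma bernoulliPoly_odd_half (k : ℕ) : bernoulliPoly (2 * k + 1) (1 / 2) = 0 := by
  have h := Polynomial.bernoulli_eval_one_sub (2 * k + 1) (1 / 2)
  rw [pow_succ, pow_mul] at h
  norm_num at h
  have := bernoulliPoly_ratCast (2 * k + 1) (1 / 2)
  push_cast at this
  rw [this, show (Polynomial.bernoulli (2 * k + 1)).eval (1 / 2 : ℚ) = 0 by linarith,
    Rat.cast_zero]

lemma bernoulliPoly_odd_zero (k : ℕ) :
    bernoulliPoly (2 * k + 1) 0 = if k = 0 then -(1 / 2) else 0 := by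
  have := bernoulliPoly_ratCast (2 * k + 1) 0
  push_cast at this
  rw [this, Polynomial.bernoulli_eval_zero]
  split_ifs with hk
  · subst hk; norm_num [bernoulli_one]
  · rw [bernoulli_eq_zero_of_odd (odd_two_mul_add_one k) (by omega), Rat.cast_zero]

lemma hasDerivAt_bernoulliPoly (n : ℕ) (x : ℝ) :
    HasDerivAt (bernoulliPoly n) (n * bernoulliPoly (n - 1) x) x := by
  have h := Polynomial.hasDerivAt ((Polynomial.bernoulli n).map (algebraMap ℚ ℝ)) x
  rwa [Polynomial.derivative_map, Polynomial.derivative_bernoulli, Polynomial.map_mul,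
    Polynomial.map_natCast, Polynomial.eval_mul, Polynomial.eval_natCast] at h

noncomputable def S' (L : ℤ) (x u : ℝ) : ℝ :=
  (-1 : ℝ) ^ L * (u * cosh ((x - 1/2) * u) / (2 * sinh (u / 2))
    - ∑ k ∈ Finset.range (L + 1).toNat,
        bernoulliPoly (2 * k) x / (Nat.factorial (2 * k) : ℝ) * u ^ (2 * k))

lemma hasDerivAt_sinh_div (u c x : ℝ) :
    HasDerivAt (fun y => sinh ((y - 1/2) * u) / c) (u * cosh ((x - 1/2) * u) / c) x := by
  refine ((((hasDerivAt_id' x).sub_const (1/2)).mul_const u).sinh.div_const c).congr_deriv ?_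
  ring

lemma hasDerivAt_cosh_div (u c x : ℝ) :
    HasDerivAt (fun y => u * cosh ((y - 1/2) * u) / c) (u ^ 2 * sinh ((x - 1/2) * u) / c) x := by
  refine (((((hasDerivAt_id' x).sub_const (1/2)).mul_const u).cosh.const_mul u).div_const c
    ).congr_deriv ?_
  ring

lemma hasDerivAt_S (L : ℤ) (x u : ℝ) : HasDerivAt (fun y => S L y u) (S' L x u) x := by
  refine ((hasDerivAt_sinh_div u _ x).sub (HasDerivAt.fun_sum fun k _ =>
    ((hasDerivAt_bernoulliPoly (2 * k + 1) x).div_const _).mul_const _)).const_mul _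
    |>.congr_deriv ?_
  rw [S']
  congr 2
  refine Finset.sum_congr rfl fun k _ => ?_
  rw [Nat.add_sub_cancel, Nat.factorial_succ]
  push_cast
  field_simp

lemma continuous_S (L : ℤ) (u : ℝ) : Continuous fun x => S L x u :=
  continuous_iff_continuousAt.2 fun x => (hasDerivAt_S L x u).continuousAt

lemma sum_even_bernoulliPoly_deriv_eq (N : ℕ) (x u : ℝ) :
    ∑ k ∈ Finset.range N, ((2 * k : ℕ) : ℝ) * bernoulliPoly (2 * k - 1) x /
        (Nat.factorial (2 * k) : ℝ) * u ^ (2 * k)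
      = u ^ 2 * ∑ k ∈ Finset.range (N - 1),
        bernoulliPoly (2 * k + 1) x / (Nat.factorial (2 * k + 1) : ℝ) * u ^ (2 * k) := by
  cases N with
  | zero => simp
  | succ n =>
    rw [Finset.sum_range_succ', Finset.mul_sum, Nat.add_sub_cancel]
    simp only [Nat.mul_zero, Nat.cast_zero, zero_mul, zero_div, add_zero]
    refine Finset.sum_congr rfl fun k _ => ?_
    rw [show 2 * (k + 1) - 1 = 2 * k + 1 by omega, show 2 * (k + 1) = 2 * k + 1 + 1 by omega,
      Nat.factorial_succ]
    push_cast
    field_simp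
    ring

lemma hasDerivAt_S' (L : ℤ) (x u : ℝ) :
    HasDerivAt (fun y => S' L y u) (-(u ^ 2 * S (L - 1) x u)) x := by
  refine ((hasDerivAt_cosh_div u _ x).sub (HasDerivAt.fun_sum fun k _ =>
    ((hasDerivAt_bernoulliPoly (2 * k) x).div_const _).mul_const _)).const_mul _ |>.congr_deriv ?_
  rw [sum_even_bernoulliPoly_deriv_eq, S, sub_add_cancel,
    show (L + 1).toNat - 1 = L.toNat by omega, zpow_sub_one₀ (by norm_num)]
  ring

lemma S_half (L : ℤ) (u : ℝ) : S L (1 / 2) u = 0 := by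
  rw [S, sub_self, zero_mul, sinh_zero, zero_div, zero_sub,
    Finset.sum_eq_zero fun k _ => by rw [bernoulliPoly_odd_half, zero_div, zero_mul], neg_zero,
    mul_zero]

lemma S_zero {L : ℤ} (hL : 0 ≤ L) {u : ℝ} (hu : u ≠ 0) : S L 0 u = 0 := by
  have hsinh : sinh (u / 2) ≠ 0 := by simpa using hu
  have hsum : ∑ k ∈ Finset.range (L + 1).toNat,
      bernoulliPoly (2 * k + 1) 0 / (Nat.factorial (2 * k + 1) : ℝ) * u ^ (2 * k) = -(1 / 2) := by
    simp only [bernoulliPoly_odd_zero, ite_div, ite_mul, zero_div, zero_mul]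
    rw [Finset.sum_ite_eq', if_pos (Finset.mem_range.2 (by omega))]
    simp
  rw [S, hsum, show ((0 : ℝ) - 1 / 2) * u = -(u / 2) by ring, sinh_neg]
  field_simp
  ring

lemma S_neg_one_pos {x u : ℝ} (hx : x < 1 / 2) (hu : 0 < u) : 0 < S (-1) x u := by
  have hnum : sinh ((x - 1 / 2) * u) < 0 :=
    sinh_neg_iff.2 (mul_neg_of_neg_of_pos (by linarith) hu)
  have hden : 0 < 2 * sinh (u / 2) := by positivity
  simpa [S] using div_neg_of_neg_of_pos hnum hden

lemma strictAntiOn_deriv_S {L : ℤ} {u : ℝ} (hu : u ≠ 0)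
    (hpos : ∀ x ∈ Ioo (0 : ℝ) (1 / 2), 0 < S L x u) :
    StrictAntiOn (deriv fun x => S (L + 1) x u) (Icc 0 (1 / 2)) := by
  have hderiv : (deriv fun x => S (L + 1) x u) = fun x => S' (L + 1) x u :=
    funext fun x => (hasDerivAt_S _ x u).deriv
  rw [hderiv]
  refine strictAntiOn_of_deriv_neg (convex_Icc _ _)
    (fun x _ => (hasDerivAt_S' _ x u).continuousAt.continuousWithinAt) fun x hx => ?_
  rw [interior_Icc] at hx
  rw [(hasDerivAt_S' _ x u).deriv, add_sub_cancel_right, neg_lt_zero]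
  exact mul_pos (by positivity) (hpos x hx)

lemma S_pos {L : ℤ} (hL : -1 ≤ L) {u : ℝ} (hu : 0 < u) :
    ∀ x ∈ Ioo (0 : ℝ) (1 / 2), 0 < S L x u := by
  induction L, hL using Int.leInduction with
  | base => exact fun x hx => S_neg_one_pos hx.2 hu
  | succ L hL ih =>
    have hconcave : StrictConcaveOn ℝ (Icc 0 (1 / 2)) fun x => S (L + 1) x u :=
      StrictAntiOn.strictConcaveOn_of_deriv (convex_Icc _ _) (continuous_S _ u).continuousOn
        (by simpa only [interior_Icc] using
          (strictAntiOn_deriv_S hu.ne' ih).mono Ioo_subset_Icc_self)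
    intro x hx
    have := hconcave.lt_on_openSegment (left_mem_Icc.2 (by norm_num))
      (right_mem_Icc.2 (by norm_num)) (by norm_num) (by rwa [openSegment_eq_Ioo (by norm_num)])
    rwa [S_zero (by omega) hu.ne', S_half, min_self] at this

/-- For every integer `L ≥ 0` and every `u > 0`, the function
`x ↦ S_{L+1}(x,u)` has on `(0,1/2)` exactly one critical point `xm`, is strictly
increasing on `(0, xm)` and strictly decreasing on `(xm, 1/2)`. -/
theorem S_unique_critical_point (L : ℤ) (hL : 0 ≤ L) (u : ℝ) (hu : 0 < u) :
    ∃ xm ∈ Set.Ioo (0 : ℝ) (1/2),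
      (∀ y ∈ Set.Ioo (0 : ℝ) (1/2), deriv (fun x => S (L + 1) x u) y = 0 ↔ y = xm) ∧
      StrictMonoOn (fun x => S (L + 1) x u) (Set.Ioo 0 xm) ∧
      StrictAntiOn (fun x => S (L + 1) x u) (Set.Ioo xm (1/2)) :=
  exists_unique_critical_point_of_strictAntiOn_deriv (by norm_num) (continuous_S _ u).continuousOn
    (by rw [S_zero (by omega) hu.ne', S_half])
    ((strictAntiOn_deriv_S hu.ne' (S_pos (by omega) hu)).mono Ioo_subset_Icc_self)
end
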